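/- arXiv:2407.04278 — 2 statements merged into one kernel-verified Lean document; each statement's English description precedes it below -/
import Mathlib

section
/- Let t : X → B(H) and s : X → B(K) be Toeplitz-type representation maps of a Hilbert C*-module X over a C*-algebra A relative to *-homomorphisms ρ_H : A → B(H) and ρ_K : A → B(K) respectively. Let V : H → K be a bounded linear isometry (V*V = 1_H) which is A-linear in the sense that V ρ_H(a) = ρ_K(a) V for all a ∈ A, and suppose V* s(ξ) V = t(ξ) for all ξ ∈ X. Then s(ξ) V = V t(ξ) for all ξ ∈ X. -/
/-!
Put `D = s(ξ) V - V t(ξ)`. Expanding `D* D` and using `V* s(ξ) V = t(ξ)` (and its adjoint) turns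
three of its four terms into `± t(ξ)* t(ξ)`, while the fourth is
`V* s(ξ)* s(ξ) V = V* ρ_K⟪ξ, ξ⟫ V = V* V ρ_H⟪ξ, ξ⟫ = ρ_H⟪ξ, ξ⟫ = t(ξ)* t(ξ)`, by `A`-linearity of `V`.
Hence `D* D = 0`, and so `D = 0` by the C*-identity.
-/

open ContinuousLinearMap

section Compression

variable {𝕜 H K : Type*} [RCLike 𝕜]
  [NormedAddCommGroup H] [InnerProductSpace 𝕜 H] [CompleteSpace H]
  [NormedAddCommGroup K] [InnerProductSpace 𝕜 K] [CompleteSpace K]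
  {V : H →L[𝕜] K}

theorem adjoint_comp_comp_self_of_comp_eq (hV : adjoint V ∘L V = 1) {a : H →L[𝕜] H}
    {b : K →L[𝕜] K} (hab : V ∘L a = b ∘L V) : adjoint V ∘L b ∘L V = a := by
  rw [← hab, ← comp_assoc, hV, one_def, id_comp]

theorem comp_eq_comp_of_compression (hV : adjoint V ∘L V = 1) {S : K →L[𝕜] K}
    {T : H →L[𝕜] H} (hST : adjoint V ∘L S ∘L V = T)
    (hgram : adjoint V ∘L (adjoint S ∘L S) ∘L V = adjoint T ∘L T) :
    S ∘L V = V ∘L T := by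
  have hST' : adjoint V ∘L adjoint S ∘L V = adjoint T := by
    simpa only [adjoint_comp, adjoint_adjoint, comp_assoc] using congrArg adjoint hST
  have hVT : adjoint V ∘L V ∘L T = T := by rw [← comp_assoc, hV, one_def, id_comp]
  rw [← sub_eq_zero, ← adjoint_comp_self_eq_zero_iff]
  calc adjoint (S ∘L V - V ∘L T) ∘L (S ∘L V - V ∘L T)
      = adjoint V ∘L (adjoint S ∘L S) ∘L V - (adjoint V ∘L adjoint S ∘L V) ∘L T
          - adjoint T ∘L (adjoint V ∘L S ∘L V) + adjoint T ∘L (adjoint V ∘L V ∘L T) := by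
        simp only [adjoint_comp, map_sub, sub_comp, comp_sub, comp_assoc]
        abel
    _ = 0 := by rw [hgram, hST', hST, hVT]; abel

end Compression

theorem stmt2_general
    {A : Type*} [NormedRing A] [StarRing A] [NormedAlgebra ℂ A]
    {H K : Type*} [NormedAddCommGroup H] [InnerProductSpace ℂ H] [CompleteSpace H]
    [NormedAddCommGroup K] [InnerProductSpace ℂ K] [CompleteSpace K]
    {X : Type*} [NormedAddCommGroup X] [Module ℂ X]
    (inner : X → X → A)
    (ρH : A →⋆ₙₐ[ℂ] (H →L[ℂ] H)) (ρK : A →⋆ₙₐ[ℂ] (K →L[ℂ] K))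
    (t : X →ₗ[ℂ] (H →L[ℂ] H)) (s : X →ₗ[ℂ] (K →L[ℂ] K))
    (ht : ∀ ξ η : X, (ContinuousLinearMap.adjoint (t ξ)) ∘L (t η) = ρH (inner ξ η))
    (hs : ∀ ξ η : X, (ContinuousLinearMap.adjoint (s ξ)) ∘L (s η) = ρK (inner ξ η))
    (V : H →L[ℂ] K)
    (hV : (ContinuousLinearMap.adjoint V) ∘L V = 1)
    (hlin : ∀ a : A, V ∘L ρH a = ρK a ∘L V)
    (hdil : ∀ ξ : X, (ContinuousLinearMap.adjoint V) ∘L (s ξ) ∘L V = t ξ) :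
    ∀ ξ : X, (s ξ) ∘L V = V ∘L (t ξ) := by
  intro ξ
  refine comp_eq_comp_of_compression hV (hdil ξ) ?_
  rw [hs, ht]
  exact adjoint_comp_comp_self_of_comp_eq hV (hlin _)

/-- If `t : X → B(H)` and `s : X → B(K)` are Toeplitz-type representation
maps of a Hilbert C*-module `X` over a C*-algebra `A`, relative to *-homomorphisms
`ρ_H : A → B(H)` and `ρ_K : A → B(K)`, and `V : H → K` is an `A`-linear bounded isometry
with `V* s(ξ) V = t(ξ)` for all `ξ`, then `s(ξ) V = V t(ξ)` for all `ξ ∈ X`. -/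
theorem stmt2
    {A : Type*} [NormedRing A] [StarRing A] [CStarRing A] [NormedAlgebra ℂ A]
    [StarModule ℂ A]
    {H K : Type*} [NormedAddCommGroup H] [InnerProductSpace ℂ H] [CompleteSpace H]
    [NormedAddCommGroup K] [InnerProductSpace ℂ K] [CompleteSpace K]
    {X : Type*} [NormedAddCommGroup X] [Module ℂ X]
    (inner : X → X → A)
    (hsymm : ∀ ξ η : X, star (inner ξ η) = inner η ξ)
    (hnorm : ∀ ξ : X, ‖inner ξ ξ‖ = ‖ξ‖ ^ 2)
    (ρH : A →⋆ₙₐ[ℂ] (H →L[ℂ] H)) (ρK : A →⋆ₙₐ[ℂ] (K →L[ℂ] K))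
    (t : X →ₗ[ℂ] (H →L[ℂ] H)) (s : X →ₗ[ℂ] (K →L[ℂ] K))
    (ht : ∀ ξ η : X, (ContinuousLinearMap.adjoint (t ξ)) ∘L (t η) = ρH (inner ξ η))
    (hs : ∀ ξ η : X, (ContinuousLinearMap.adjoint (s ξ)) ∘L (s η) = ρK (inner ξ η))
    (V : H →L[ℂ] K)
    (hV : (ContinuousLinearMap.adjoint V) ∘L V = 1)
    (hlin : ∀ a : A, V ∘L ρH a = ρK a ∘L V)
    (hdil : ∀ ξ : X, (ContinuousLinearMap.adjoint V) ∘L (s ξ) ∘L V = t ξ) :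
    ∀ ξ : X, (s ξ) ∘L V = V ∘L (t ξ) :=
  stmt2_general inner ρH ρK t s ht hs V hV hlin hdil
end

section
/- Let t : X → B(H) and s : X → B(K) be Toeplitz-type representation maps of a Hilbert C*-module X over a C*-algebra A relative to *-homomorphisms ρ_H : A → B(H) and ρ_K : A → B(K), let V : H → K be a bounded linear isometry with V ρ_H(a) = ρ_K(a) V for all a ∈ A and V* s(ξ) V = t(ξ) for all ξ ∈ X. Then for every n ≥ 1 and all ξ₁, ξ₂, …, ξₙ ∈ X one has V* s(ξ₁) s(ξ₂) ⋯ s(ξₙ) V = t(ξ₁) t(ξ₂) ⋯ t(ξₙ); that is, compression by V is multiplicative on products of the operators s(ξᵢ). -/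
/-!
An isometry `V` with `V† s(ξ) V = t(ξ)` in fact intertwines: `s(ξ) V = V t(ξ)`. Indeed, the
Toeplitz relations and `V ρ_H = ρ_K V` give
`(s(ξ) V)† (s(ξ) V) = V† ρ_K(⟪ξ, ξ⟫) V = t(ξ)† t(ξ)`, and then
`(s(ξ) V - V t(ξ))† (s(ξ) V - V t(ξ)) = 0`. Intertwining passes to
products, and compressing `s(ξ₁) ⋯ s(ξₙ) V = V t(ξ₁) ⋯ t(ξₙ)` by `V†` gives the claim.
-/

open ContinuousLinearMap

theorem ContinuousLinearMap.list_prod_map_comp_eq_comp_list_prod_map {R M N ι : Type*} [Semiring R]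
    [TopologicalSpace M] [AddCommMonoid M] [Module R M]
    [TopologicalSpace N] [AddCommMonoid N] [Module R N]
    {S : ι → N →L[R] N} {T : ι → M →L[R] M} {V : M →L[R] N}
    (hST : ∀ i, S i ∘L V = V ∘L T i) (l : List ι) :
    (l.map S).prod ∘L V = V ∘L (l.map T).prod := by
  induction l with
  | nil => rfl
  | cons i l ih =>
    simp only [List.map_cons, List.prod_cons, mul_def]
    rw [comp_assoc, ih, ← comp_assoc, hST i, comp_assoc]

theorem ContinuousLinearMap.eq_comp_of_adjoint_comp_eq {𝕜 H K : Type*} [RCLike 𝕜]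
    [NormedAddCommGroup H] [InnerProductSpace 𝕜 H] [CompleteSpace H]
    [NormedAddCommGroup K] [InnerProductSpace 𝕜 K] [CompleteSpace K]
    {V W : H →L[𝕜] K} {T : H →L[𝕜] H}
    (hV : adjoint V ∘L V = 1) (hVW : adjoint V ∘L W = T)
    (hW : adjoint W ∘L W = adjoint T ∘L T) :
    W = V ∘L T := by
  have hWV : adjoint W ∘L V = adjoint T := by
    rw [← hVW, adjoint_comp, adjoint_adjoint]
  have hgram : adjoint (W - V ∘L T) ∘L (W - V ∘L T) = 0 := by
    have hWVT : adjoint W ∘L V ∘L T = adjoint T ∘L T := by rw [← comp_assoc, hWV]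
    have hTVW : adjoint T ∘L adjoint V ∘L W = adjoint T ∘L T := by rw [hVW]
    have hTVVT : adjoint T ∘L adjoint V ∘L V ∘L T = adjoint T ∘L T := by
      rw [← comp_assoc (adjoint V), hV, one_def, id_comp]
    simp only [map_sub, adjoint_comp, sub_comp, comp_sub, comp_assoc, hW, hWVT, hTVW, hTVVT]
    abel
  exact sub_eq_zero.mp (adjoint_comp_self_eq_zero_iff.mp hgram)

theorem stmt3_general
    {A : Type*} [NormedRing A] [StarRing A] [NormedAlgebra ℂ A]
    {H K : Type*} [NormedAddCommGroup H] [InnerProductSpace ℂ H] [CompleteSpace H]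
    [NormedAddCommGroup K] [InnerProductSpace ℂ K] [CompleteSpace K]
    {X : Type*} [NormedAddCommGroup X] [Module ℂ X]
    (inner : X → X → A)
    (ρH : A →⋆ₙₐ[ℂ] (H →L[ℂ] H)) (ρK : A →⋆ₙₐ[ℂ] (K →L[ℂ] K))
    (t : X →ₗ[ℂ] (H →L[ℂ] H)) (s : X →ₗ[ℂ] (K →L[ℂ] K))
    (ht : ∀ ξ η : X, (ContinuousLinearMap.adjoint (t ξ)) ∘L (t η) = ρH (inner ξ η))
    (hs : ∀ ξ η : X, (ContinuousLinearMap.adjoint (s ξ)) ∘L (s η) = ρK (inner ξ η))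
    (V : H →L[ℂ] K)
    (hV : (ContinuousLinearMap.adjoint V) ∘L V = 1)
    (hlin : ∀ a : A, V ∘L ρH a = ρK a ∘L V)
    (hdil : ∀ ξ : X, (ContinuousLinearMap.adjoint V) ∘L (s ξ) ∘L V = t ξ) :
    ∀ (n : ℕ), 1 ≤ n → ∀ ξ : Fin n → X,
      (ContinuousLinearMap.adjoint V) ∘L (List.ofFn fun i => s (ξ i)).prod ∘L V
        = (List.ofFn fun i => t (ξ i)).prod := by
  have hρ (a : A) : adjoint V ∘L ρK a ∘L V = ρH a := by
    rw [← hlin, ← comp_assoc, hV, one_def, id_comp]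
  have hintertwine (ξ : X) : s ξ ∘L V = V ∘L t ξ := by
    refine eq_comp_of_adjoint_comp_eq hV (hdil ξ) ?_
    rw [adjoint_comp, comp_assoc, ← comp_assoc (adjoint (s ξ)), hs, hρ, ht]
  intro n _ ξ
  rw [List.ofFn_eq_map, List.ofFn_eq_map,
    list_prod_map_comp_eq_comp_list_prod_map fun i => hintertwine (ξ i),
    ← comp_assoc, hV, one_def, id_comp]

/-- With `(K, s, V)` an isometric dilation of a Toeplitz-type representation
`(H, t)` of a Hilbert C*-module `X` over a C*-algebra `A`, compression by `V` is
multiplicative on products: `V* s(ξ₁) ⋯ s(ξₙ) V = t(ξ₁) ⋯ t(ξₙ)` for all `n ≥ 1` and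
`ξ₁, …, ξₙ ∈ X`. -/
theorem stmt3
    {A : Type*} [NormedRing A] [StarRing A] [CStarRing A] [NormedAlgebra ℂ A]
    [StarModule ℂ A]
    {H K : Type*} [NormedAddCommGroup H] [InnerProductSpace ℂ H] [CompleteSpace H]
    [NormedAddCommGroup K] [InnerProductSpace ℂ K] [CompleteSpace K]
    {X : Type*} [NormedAddCommGroup X] [Module ℂ X]
    (inner : X → X → A)
    (hsymm : ∀ ξ η : X, star (inner ξ η) = inner η ξ)
    (hnorm : ∀ ξ : X, ‖inner ξ ξ‖ = ‖ξ‖ ^ 2)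
    (ρH : A →⋆ₙₐ[ℂ] (H →L[ℂ] H)) (ρK : A →⋆ₙₐ[ℂ] (K →L[ℂ] K))
    (t : X →ₗ[ℂ] (H →L[ℂ] H)) (s : X →ₗ[ℂ] (K →L[ℂ] K))
    (ht : ∀ ξ η : X, (ContinuousLinearMap.adjoint (t ξ)) ∘L (t η) = ρH (inner ξ η))
    (hs : ∀ ξ η : X, (ContinuousLinearMap.adjoint (s ξ)) ∘L (s η) = ρK (inner ξ η))
    (V : H →L[ℂ] K)
    (hV : (ContinuousLinearMap.adjoint V) ∘L V = 1)
    (hlin : ∀ a : A, V ∘L ρH a = ρK a ∘L V)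
    (hdil : ∀ ξ : X, (ContinuousLinearMap.adjoint V) ∘L (s ξ) ∘L V = t ξ) :
    ∀ (n : ℕ), 1 ≤ n → ∀ ξ : Fin n → X,
      (ContinuousLinearMap.adjoint V) ∘L (List.ofFn fun i => s (ξ i)).prod ∘L V
        = (List.ofFn fun i => t (ξ i)).prod :=
  stmt3_general inner ρH ρK t s ht hs V hV hlin hdil
end
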